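/- Let d ≥ 2 and κ ≥ 1 be coprime integers, and write d' = d if d is odd and d' = d/2 if d is even. For all integers n, m ≥ 0: π_{κ/d}(∏_{i=n+1}^{n+d'}(q^{2i} − 1)) − π_{κ/d}(∏_{i=m+1}^{m+d'}(q^{2i} − 1)) = 4κ(n−m)d'/d. -/

import Mathlib

open Polynomial

/-- `argCount t f` is the cardinality of the multiset `Arg_t(f)` of real numbers `λ` with
`0 < λ ≤ 2πt` such that `e^{iλ}` is a (complex) root of the real polynomial `f`, each such `λ`
counted with the multiplicity of `e^{iλ}` as a root of `f`. -/
noncomputable def argCount (t : ℝ) (f : Polynomial ℝ) : ℕ :=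
  ((f.map (algebraMap ℝ ℂ)).roots.map fun ξ =>
    Nat.card {l : ℝ // 0 < l ∧ l ≤ 2 * Real.pi * t ∧ Complex.exp ((l : ℂ) * Complex.I) = ξ}).sum

/-- `piFn κ d f` is the rational number
`π_{κ/d}(f) = (a(f) + A(f))·(κ/d) + |Arg_{κ/d}(f)| + (1/2)·(multiplicity of 1 as a root of f)`,
where `a(f)` is the multiplicity of `0` as a root of `f` and `A(f)` is the degree of `f`. -/
noncomputable def piFn (κ d : ℕ) (f : Polynomial ℝ) : ℚ :=
  ((rootMultiplicity 0 f : ℚ) + (f.natDegree : ℚ)) * (κ : ℚ) / (d : ℚ)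
    + (argCount ((κ : ℝ) / (d : ℝ)) f : ℚ) + (rootMultiplicity 1 f : ℚ) / 2

/-!
`π_{κ/d}` is additive on products of nonzero polynomials. For `N > 0` the roots of `q^N - 1`
are simple, and the `λ ∈ (0, 2πκ/d]` with `(e^{iλ})^N = 1` are exactly the `2πm/N` with
`0 < m ≤ Nκ/d`; hence `π_{κ/d}(q^N - 1) = Nκ/d + ⌊Nκ/d⌋ + 1/2`. When `d ∣ 2d'`, replacing the
factor `q^{2i} - 1` by `q^{2(i+d')} - 1` raises this by exactly `4d'κ/d`, so sliding the window
`(n, n + d']` of factors one step to the right adds `4d'κ/d` to `π_{κ/d}` of the product.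
-/

open Finset

lemma exp_mul_I_pow_eq_one_iff (N : ℕ) (l : ℝ) :
    Complex.exp (l * Complex.I) ^ N = 1 ↔ ∃ m : ℤ, (N : ℝ) * l = 2 * Real.pi * m := by
  rw [← Complex.exp_nat_mul, Complex.exp_eq_one_iff]
  refine exists_congr fun m => ?_
  rw [← Complex.ofReal_inj]
  push_cast
  constructor <;> intro h
  · linear_combination -Complex.I * h + (N * l - 2 * Real.pi * m) * Complex.I_sq
  · linear_combination Complex.I * h

lemma mem_image_Ioc_floor_iff {N : ℕ} (hN : 0 < N) (t l : ℝ) :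
    l ∈ (Ioc 0 ⌊N * t⌋).image (fun m : ℤ => 2 * Real.pi * m / N) ↔
      0 < l ∧ l ≤ 2 * Real.pi * t ∧ Complex.exp (l * Complex.I) ^ N = 1 := by
  have hN' : (0 : ℝ) < N := by exact_mod_cast hN
  simp only [mem_image, mem_Ioc, exp_mul_I_pow_eq_one_iff, Int.le_floor]
  constructor
  · rintro ⟨m, ⟨hm0, hmt⟩, rfl⟩
    have hm0' : (0 : ℝ) < m := by exact_mod_cast hm0
    refine ⟨by positivity, ?_, m, by field_simp⟩
    rw [div_le_iff₀ hN']
    nlinarith [Real.pi_pos]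
  · rintro ⟨hl0, hlt, m, hm⟩
    refine ⟨m, ⟨?_, ?_⟩, ?_⟩
    · have : (0 : ℝ) < m := by nlinarith [Real.pi_pos]
      exact_mod_cast this
    · nlinarith [Real.pi_pos]
    · rw [← hm]; field_simp

lemma argCount_X_pow_sub_one (t : ℝ) {N : ℕ} (hN : 0 < N) :
    argCount t (X ^ N - 1) = ⌊N * t⌋₊ := by
  classical
  set A := (Ioc 0 ⌊N * t⌋).image (fun m : ℤ => 2 * Real.pi * m / N)
  have hroots :
      ((X ^ N - 1 : ℝ[X]).map (algebraMap ℝ ℂ)).roots = (nthRootsFinset N (1 : ℂ)).val := by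
    rw [nthRootsFinset_def, Multiset.toFinset_val,
      ((Complex.isPrimitiveRoot_exp N hN.ne').nthRoots_one_nodup).dedup]
    simp [nthRoots]
  have hfiber : ∀ ξ ∈ nthRootsFinset N (1 : ℂ),
      Nat.card {l : ℝ // 0 < l ∧ l ≤ 2 * Real.pi * t ∧ Complex.exp (l * Complex.I) = ξ} =
        #(A.filter fun l : ℝ => Complex.exp (l * Complex.I) = ξ) := by
    intro ξ hξ
    rw [mem_nthRootsFinset hN] at hξ
    rw [← Nat.card_eq_finsetCard]
    refine Nat.card_congr (Equiv.subtypeEquivRight fun l => ?_)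
    rw [mem_filter, mem_image_Ioc_floor_iff hN]
    constructor
    · rintro ⟨h0, ht, he⟩; exact ⟨⟨h0, ht, he ▸ hξ⟩, he⟩
    · rintro ⟨⟨h0, ht, -⟩, he⟩; exact ⟨h0, ht, he⟩
  have hmaps :
      (A : Set ℝ).MapsTo (fun l : ℝ => Complex.exp (l * Complex.I))
        (nthRootsFinset N (1 : ℂ)) :=
    fun l hl => (mem_nthRootsFinset hN _).2 ((mem_image_Ioc_floor_iff hN t l).1 hl).2.2
  have hinj : Function.Injective fun m : ℤ => 2 * Real.pi * m / N := by
    intro a b h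
    have : (a : ℝ) = b := by
      field_simp at h
      simpa [Real.pi_ne_zero] using h
    exact_mod_cast this
  calc argCount t (X ^ N - 1)
      = ∑ ξ ∈ nthRootsFinset N (1 : ℂ),
          #(A.filter fun l : ℝ => Complex.exp (l * Complex.I) = ξ) := by
        rw [argCount, hroots]; exact sum_congr rfl hfiber
    _ = #A := (card_eq_sum_card_fiberwise hmaps).symm
    _ = ⌊N * t⌋₊ := by
        rw [card_image_of_injective _ hinj, Int.card_Ioc, sub_zero, Int.floor_toNat]

lemma argCount_mul (t : ℝ) {f g : ℝ[X]} (hf : f ≠ 0) (hg : g ≠ 0) :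
    argCount t (f * g) = argCount t f + argCount t g := by
  rw [argCount, Polynomial.map_mul,
    roots_mul (mul_ne_zero (Polynomial.map_ne_zero hf) (Polynomial.map_ne_zero hg)),
    Multiset.map_add, Multiset.sum_add, argCount, argCount]

lemma piFn_mul (κ d : ℕ) {f g : ℝ[X]} (hf : f ≠ 0) (hg : g ≠ 0) :
    piFn κ d (f * g) = piFn κ d f + piFn κ d g := by
  have hfg := mul_ne_zero hf hg
  simp only [piFn, rootMultiplicity_mul hfg, natDegree_mul hf hg, argCount_mul _ hf hg]
  push_cast
  ring

lemma piFn_one (κ d : ℕ) : piFn κ d 1 = 0 := by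
  have h (x : ℝ) : rootMultiplicity x (1 : ℝ[X]) = 0 := by rw [← C_1, rootMultiplicity_C]
  simp [piFn, argCount, h]

lemma piFn_prod (κ d : ℕ) {ι : Type*} (s : Finset ι) (f : ι → ℝ[X])
    (hf : ∀ i ∈ s, f i ≠ 0) :
    piFn κ d (∏ i ∈ s, f i) = ∑ i ∈ s, piFn κ d (f i) := by
  classical
  induction s using Finset.induction_on with
  | empty => exact piFn_one κ d
  | insert a s ha ih =>
    rw [prod_insert ha, sum_insert ha, piFn_mul κ d (hf a (mem_insert_self a s))
      (prod_ne_zero_iff.2 fun i hi => hf i (mem_insert_of_mem hi)),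
      ih fun i hi => hf i (mem_insert_of_mem hi)]

lemma rootMultiplicity_one_X_pow_sub_one {N : ℕ} (hN : 0 < N) :
    rootMultiplicity (1 : ℝ) (X ^ N - 1) = 1 := by
  have hsep : (X ^ N - C (1 : ℝ)).Separable :=
    separable_X_pow_sub_C 1 (by exact_mod_cast hN.ne') one_ne_zero
  rw [C_1] at hsep
  refine le_antisymm (rootMultiplicity_le_one_of_separable hsep 1) ?_
  rw [Nat.one_le_iff_ne_zero, ← Nat.pos_iff_ne_zero, rootMultiplicity_pos hsep.ne_zero]
  simp

lemma piFn_X_pow_sub_one (κ d : ℕ) {N : ℕ} (hN : 0 < N) :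
    piFn κ d (X ^ N - 1) = N * κ / d + (N * κ / d : ℕ) + 1 / 2 := by
  have hroot0 : rootMultiplicity 0 (X ^ N - 1 : ℝ[X]) = 0 :=
    rootMultiplicity_eq_zero (by simp [hN.ne'])
  have hdeg : (X ^ N - 1 : ℝ[X]).natDegree = N := by
    rw [← C_1, natDegree_X_pow_sub_C]
  have harg : argCount ((κ : ℝ) / d) (X ^ N - 1) = N * κ / d := by
    rw [argCount_X_pow_sub_one _ hN, ← mul_div_assoc, ← Nat.floor_div_eq_div (K := ℝ)]
    push_cast; rfl
  rw [piFn, hroot0, hdeg, harg, rootMultiplicity_one_X_pow_sub_one hN]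
  push_cast
  ring

lemma sum_Ioc_add_eq_sum_Ioc_zero_add_nsmul {M : Type*} [AddCancelCommMonoid M] {f : ℕ → M}
    {p : ℕ} {c : M} (h : ∀ i, 0 < i → f (i + p) = f i + c) (n : ℕ) :
    ∑ i ∈ Ioc n (n + p), f i = ∑ i ∈ Ioc 0 p, f i + n • c := by
  induction n with
  | zero => simp
  | succ n ih =>
    refine add_left_cancel (a := f (n + 1)) ?_
    calc f (n + 1) + ∑ i ∈ Ioc (n + 1) (n + 1 + p), f i
        = ∑ i ∈ Ioc n (n + p + 1), f i := by
          rw [← sum_Ioc_consecutive f (Nat.le_succ n) (by omega : n + 1 ≤ n + p + 1),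
            Nat.Ioc_succ_singleton, sum_singleton, add_right_comm]
      _ = ∑ i ∈ Ioc n (n + p), f i + f (n + 1 + p) := by
          rw [sum_Ioc_succ_top (by omega), add_right_comm]
      _ = f (n + 1) + (∑ i ∈ Ioc 0 p, f i + (n + 1) • c) := by
          rw [ih, h _ n.succ_pos, succ_nsmul]; abel

lemma piFn_X_pow_sub_one_add (κ d : ℕ) {N M : ℕ} (hN : 0 < N) (hM : d ∣ M) :
    piFn κ d (X ^ (N + M) - 1) = piFn κ d (X ^ N - 1) + 2 * M * κ / d := by
  rw [piFn_X_pow_sub_one κ d hN, piFn_X_pow_sub_one κ d (by omega), add_mul,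
    Nat.add_div_of_dvd_left (hM.mul_right κ)]
  push_cast [Nat.cast_div_charZero (hM.mul_right κ)]
  ring

lemma piFn_prod_Ioc_X_pow_sub_one (κ d d' : ℕ) (hdvd : d ∣ 2 * d') (n : ℕ) :
    piFn κ d (∏ i ∈ Ioc n (n + d'), (X ^ (2 * i) - 1)) =
      piFn κ d (∏ i ∈ Ioc 0 d', (X ^ (2 * i) - 1)) + 4 * κ * n * d' / d := by
  have hne (k : ℕ) : ∀ i ∈ Ioc k (k + d'), (X ^ (2 * i) - 1 : ℝ[X]) ≠ 0 := fun i hi =>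
    (C_1 (R := ℝ) ▸ monic_X_pow_sub_C (1 : ℝ) (by grind)).ne_zero
  have hper (i : ℕ) (hi : 0 < i) :
      piFn κ d (X ^ (2 * (i + d')) - 1) = piFn κ d (X ^ (2 * i) - 1) + 4 * d' * κ / d := by
    rw [mul_add, piFn_X_pow_sub_one_add κ d (by omega) hdvd]
    push_cast; ring
  rw [piFn_prod κ d _ _ (hne n), piFn_prod κ d _ _ (by simpa using hne 0),
    sum_Ioc_add_eq_sum_Ioc_zero_add_nsmul hper, nsmul_eq_mul]
  ring

theorem piFn_prod_diff_orthog_general (κ d : ℕ) (d' : ℕ)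
    (hd' : (Odd d ∧ d' = d) ∨ (Even d ∧ 2 * d' = d)) (n m : ℕ) :
    piFn κ d (∏ i ∈ Finset.Ioc n (n + d'), (X ^ (2 * i) - 1)) -
        piFn κ d (∏ i ∈ Finset.Ioc m (m + d'), (X ^ (2 * i) - 1)) =
      4 * (κ : ℚ) * ((n : ℚ) - (m : ℚ)) * (d' : ℚ) / (d : ℚ) := by
  have hdvd : d ∣ 2 * d' := by
    rcases hd' with ⟨-, h⟩ | ⟨-, h⟩
    · rw [h]; exact dvd_mul_left d 2
    · rw [← h]
  rw [piFn_prod_Ioc_X_pow_sub_one κ d d' hdvd n, piFn_prod_Ioc_X_pow_sub_one κ d d' hdvd m]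
  ring

/-- Proposition 8.5: with `d' = d` if `d` is odd and `d' = d/2` if `d` is even, for all
`n, m ≥ 0`:
`π_{κ/d}(∏_{i=n+1}^{n+d'}(q^{2i} − 1)) − π_{κ/d}(∏_{i=m+1}^{m+d'}(q^{2i} − 1)) = 4κ(n−m)d'/d`. -/
theorem piFn_prod_diff_orthog (κ d : ℕ) (hd : 2 ≤ d) (hκ : 1 ≤ κ) (hcop : Nat.Coprime κ d)
    (d' : ℕ) (hd' : (Odd d ∧ d' = d) ∨ (Even d ∧ 2 * d' = d)) (n m : ℕ) :
    piFn κ d (∏ i ∈ Finset.Ioc n (n + d'), (X ^ (2 * i) - 1)) -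
        piFn κ d (∏ i ∈ Finset.Ioc m (m + d'), (X ^ (2 * i) - 1)) =
      4 * (κ : ℚ) * ((n : ℚ) - (m : ℚ)) * (d' : ℚ) / (d : ℚ) :=
  piFn_prod_diff_orthog_general κ d d' hd' n m
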